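/- (Smallest eigenvalue of the perturbed Gram matrix.) Let V*, V, H ∈ ℝ^{t×r} with rows v^{*(i)}, v^{(i)}, h^{(i)} respectively, let Q ∈ ℝ^{r×r} be such that v^{(i)} = Q^{-1}v^{*(i)} + h^{(i)} for all i (i.e., V = V*Q^{-ᵀ} + H) where Q^{-1} is a right inverse of Q with σ_min(Q^{-1}) ≥ 1. If ‖H‖_F ≤ (1 − 1/√2)·√(λ_min((V*)ᵀV*)), then λ_min((V*)ᵀV*) ≤ 2·λ_min(VᵀV). Moreover, if in addition ‖Q^{-1}‖ ≤ 2, then ‖v^{(i)}‖ ≤ 2‖v^{*(i)}‖ + ‖h^{(i)}‖ for every i ∈ [t]. -/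

import Mathlib

open MeasureTheory ProbabilityTheory Matrix Finset Real

noncomputable section

/-- Euclidean norm of a finitely-indexed real vector. -/
def vnorm {n : Type*} [Fintype n] (v : n → ℝ) : ℝ := Real.sqrt (∑ j, (v j) ^ 2)

/-- Frobenius norm of a real matrix. -/
def frob {m n : Type*} [Fintype m] [Fintype n] (A : Matrix m n ℝ) : ℝ :=
  Real.sqrt (∑ i, ∑ j, (A i j) ^ 2)

/-- Spectral norm: sup over unit vectors `v` of `‖A v‖`. -/
def spec {m n : Type*} [Fintype m] [Fintype n] (A : Matrix m n ℝ) : ℝ :=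
  sSup {c | ∃ v : n → ℝ, vnorm v = 1 ∧ c = vnorm (A.mulVec v)}

/-- Smallest singular value: inf over unit vectors `v` of `‖A v‖`. -/
def smin {m n : Type*} [Fintype m] [Fintype n] (A : Matrix m n ℝ) : ℝ :=
  sInf {c | ∃ v : n → ℝ, vnorm v = 1 ∧ c = vnorm (A.mulVec v)}

/-- Smallest Rayleigh quotient: for a real symmetric matrix this is the smallest eigenvalue. -/
def lmin {n : Type*} [Fintype n] (B : Matrix n n ℝ) : ℝ :=
  sInf {c | ∃ v : n → ℝ, vnorm v = 1 ∧ c = v ⬝ᵥ B.mulVec v}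

/-- Largest Rayleigh quotient: for a real symmetric matrix this is the largest eigenvalue. -/
def lmax {n : Type*} [Fintype n] (B : Matrix n n ℝ) : ℝ :=
  sSup {c | ∃ v : n → ℝ, vnorm v = 1 ∧ c = v ⬝ᵥ B.mulVec v}

/-- `B` is the Moore–Penrose pseudoinverse of `A` (four Penrose conditions). -/
def IsMPInv {m n : Type*} [Fintype m] [Fintype n]
    (A : Matrix m n ℝ) (B : Matrix n m ℝ) : Prop :=
  A * B * A = A ∧ B * A * B = B ∧ (A * B)ᵀ = A * B ∧ (B * A)ᵀ = B * A

open scoped Classical in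
/-- The Moore–Penrose pseudoinverse of a real matrix. -/
def mpinv {m n : Type*} [Fintype m] [Fintype n] (A : Matrix m n ℝ) : Matrix n m ℝ :=
  if h : ∃ B, IsMPInv A B then h.choose else 0

/-- The entries of the family `x : ι → Ω → Fin d → ℝ` are jointly independent and each entry is
a standard Gaussian; i.e. the `x i` are i.i.d. standard Gaussian random vectors in `ℝ^d`. -/
def IIDStdGaussianVecs {Ω : Type*} [MeasureSpace Ω] {ι : Type*} {d : ℕ}
    (x : ι → Ω → Fin d → ℝ) : Prop :=
  iIndepFun (fun p : ι × Fin d => fun ω => x p.1 ω p.2) ℙ ∧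
  ∀ i k, Measure.map (fun ω => x i ω k) ℙ = gaussianReal 0 1

/-- The entries of `x` together with the noises `eps` are jointly independent, the entries of `x`
are standard Gaussians and the noises are `N(0, σ²)`. -/
def GaussianModel {Ω : Type*} [MeasureSpace Ω] {ι : Type*} {d : ℕ}
    (x : ι → Ω → Fin d → ℝ) (eps : ι → Ω → ℝ) (σ : ℝ) : Prop :=
  iIndepFun
    (fun p : (ι × Fin d) ⊕ ι =>
      Sum.elim (fun q (ω : Ω) => x q.1 ω q.2) (fun i (ω : Ω) => eps i ω) p) ℙ ∧
  (∀ i k, Measure.map (fun ω => x i ω k) ℙ = gaussianReal 0 1) ∧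
  (∀ i, Measure.map (eps i) ℙ = gaussianReal 0 (Real.toNNReal (σ ^ 2)))

/-- Empirical covariance `(1/m) ∑_j x_j x_jᵀ` of `m` vectors in `ℝ^d`. -/
def covMat {d m : ℕ} (xs : Fin m → Fin d → ℝ) : Matrix (Fin d) (Fin d) ℝ :=
  (1 / (m : ℝ)) • ∑ j, vecMulVec (xs j) (xs j)

/-- Empirical covariance `(2/m) ∑_{j < m/2} x_j x_jᵀ` built from the first half of the samples. -/
def covHalf {d m : ℕ} (xs : Fin m → Fin d → ℝ) : Matrix (Fin d) (Fin d) ℝ :=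
  (2 / (m : ℝ)) • ∑ j ∈ Finset.univ.filter (fun j : Fin m => (j : ℕ) < m / 2),
    vecMulVec (xs j) (xs j)

/-- The noise vector `z = (1/m) ∑_j ε_j x_j`. -/
def noiseVec {d m : ℕ} (es : Fin m → ℝ) (xs : Fin m → Fin d → ℝ) : Fin d → ℝ :=
  (1 / (m : ℝ)) • ∑ j, es j • xs j

/-- The Gram matrix `∑_i v_i v_iᵀ` of a family of vectors in `ℝ^r`. -/
def gramM {t r : ℕ} (v : Fin t → Fin r → ℝ) : Matrix (Fin r) (Fin r) ℝ :=
  ∑ i, vecMulVec (v i) (v i)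

/-- Operator norm, with respect to the Frobenius norm, of a map on `d × r` matrices. -/
def opFrob {d r : ℕ} (L : Matrix (Fin d) (Fin r) ℝ → Matrix (Fin d) (Fin r) ℝ) : ℝ :=
  sSup {c | ∃ M : Matrix (Fin d) (Fin r) ℝ, frob M = 1 ∧ c = frob (L M)}

/-- Frobenius (trace) inner product of two matrices. -/
def frobInner {d r : ℕ} (A B : Matrix (Fin d) (Fin r) ℝ) : ℝ := ∑ i, ∑ j, A i j * B i j

/-- `B` is the Moore–Penrose pseudoinverse of the linear operator `T` on `d × r` matrices,
with adjoints taken with respect to the Frobenius inner product (four Penrose conditions). -/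
def IsMPInvOp {d r : ℕ} (T B : Matrix (Fin d) (Fin r) ℝ → Matrix (Fin d) (Fin r) ℝ) : Prop :=
  (∀ M, T (B (T M)) = T M) ∧ (∀ M, B (T (B M)) = B M) ∧
  (∀ M N, frobInner (T (B M)) N = frobInner M (T (B N))) ∧
  (∀ M N, frobInner (B (T M)) N = frobInner M (B (T N)))

/-- The least-squares `v`-update of alternating minimization:
`v = (Uᵀ S U)† (Uᵀ S U* v* + Uᵀ z)`. -/
def vUpdate {d r m : ℕ} (U Ustar : Matrix (Fin d) (Fin r) ℝ)
    (xs : Fin m → Fin d → ℝ) (es : Fin m → ℝ) (w : Fin r → ℝ) : Fin r → ℝ :=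
  (mpinv (Uᵀ * covMat xs * U)).mulVec
    ((Uᵀ * covMat xs * Ustar).mulVec w + Uᵀ.mulVec (noiseVec es xs))

/-- The `k`-th of the `K` consecutive blocks of `[t]` after shuffling by the permutation `sh`:
the tasks sent by `sh` to positions `[k·(t/K), (k+1)·(t/K))`. -/
def blockT (t K : ℕ) (sh : Equiv.Perm (Fin t)) (k : ℕ) : Finset (Fin t) :=
  Finset.univ.filter (fun i => k * (t / K) ≤ ((sh i : Fin t) : ℕ) ∧ ((sh i : Fin t) : ℕ) < (k + 1) * (t / K))

/-- The `v`-update least-squares objective, over the first half of the samples. -/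
def lossV {d r m : ℕ} (U : Matrix (Fin d) (Fin r) ℝ) (xs : Fin m → Fin d → ℝ)
    (ys : Fin m → ℝ) (w : Fin r → ℝ) : ℝ :=
  ∑ j ∈ Finset.univ.filter (fun j : Fin m => (j : ℕ) < m / 2),
    (ys j - U.mulVec w ⬝ᵥ xs j) ^ 2

/-- The per-task `U`-update least-squares objective, over the second half of the samples. -/
def lossU {d r m : ℕ} (M : Matrix (Fin d) (Fin r) ℝ) (xs : Fin m → Fin d → ℝ)
    (ys : Fin m → ℝ) (w : Fin r → ℝ) : ℝ :=
  ∑ j ∈ Finset.univ.filter (fun j : Fin m => m / 2 ≤ (j : ℕ)),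
    (ys j - M.mulVec w ⬝ᵥ xs j) ^ 2

/-- A `⊤` σ-algebra on the group of permutations (used for random shuffles). -/
instance instMeasurablePerm {t : ℕ} : MeasurableSpace (Equiv.Perm (Fin t)) := ⊤

/-!
With `V = V* Q⁻ᵀ + H`, a unit vector `v` gives `‖V v‖ ≥ ‖V* (Q⁻ᵀ v)‖ - ‖H v‖
≥ √λ_min((V*)ᵀV*) ‖Q⁻ᵀ v‖ - ‖H‖_F ≥ √λ_min((V*)ᵀV*) / √2`, because `Q⁻ᵀ` does not shrink
vectors: `σ_min(Q⁻¹) ≥ 1` makes `Q` a contraction, so `Qᵀ` is one too and `Qᵀ Q⁻ᵀ = 1`.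
Squaring gives the eigenvalue bound; the row bound is the triangle inequality.
-/

section Vectors

variable {n : Type*} [Fintype n]

lemma vnorm_eq_norm_toLp (v : n → ℝ) : vnorm v = ‖WithLp.toLp 2 v‖ := by
  simp [vnorm, EuclideanSpace.norm_eq]

lemma vnorm_nonneg (v : n → ℝ) : 0 ≤ vnorm v := Real.sqrt_nonneg _

lemma vnorm_eq_zero {v : n → ℝ} : vnorm v = 0 ↔ v = 0 := by
  rw [vnorm_eq_norm_toLp, norm_eq_zero, WithLp.toLp_eq_zero]

lemma vnorm_sq (v : n → ℝ) : vnorm v ^ 2 = v ⬝ᵥ v := by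
  rw [vnorm, Real.sq_sqrt (by positivity)]
  simp only [dotProduct, sq]

lemma vnorm_smul (c : ℝ) (v : n → ℝ) : vnorm (c • v) = |c| * vnorm v := by
  rw [vnorm_eq_norm_toLp, vnorm_eq_norm_toLp, WithLp.toLp_smul, norm_smul, Real.norm_eq_abs]

lemma vnorm_add_le (u v : n → ℝ) : vnorm (u + v) ≤ vnorm u + vnorm v := by
  simpa only [vnorm_eq_norm_toLp, WithLp.toLp_add] using norm_add_le _ _

lemma vnorm_sub_vnorm_le_vnorm_add (u v : n → ℝ) : vnorm u - vnorm v ≤ vnorm (u + v) := by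
  simpa only [vnorm_eq_norm_toLp, WithLp.toLp_add] using norm_sub_le_norm_add _ _

lemma abs_dotProduct_le (u v : n → ℝ) : |u ⬝ᵥ v| ≤ vnorm u * vnorm v := by
  simpa only [vnorm_eq_norm_toLp, EuclideanSpace.inner_toLp_toLp, star_trivial,
    dotProduct_comm v u] using abs_real_inner_le_norm (WithLp.toLp 2 u) (WithLp.toLp 2 v)

lemma vnorm_inv_smul_self {u : n → ℝ} (hu : vnorm u ≠ 0) : vnorm ((vnorm u)⁻¹ • u) = 1 := by
  rw [vnorm_smul, abs_inv, abs_of_nonneg (vnorm_nonneg u), inv_mul_cancel₀ hu]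

end Vectors

section Matrices

variable {m n : Type*} [Fintype m] [Fintype n]

lemma mul_vnorm_le_of_forall_vnorm_eq_one {A : Matrix m n ℝ} {c : ℝ}
    (h : ∀ w, vnorm w = 1 → c ≤ vnorm (A *ᵥ w)) (u : n → ℝ) :
    c * vnorm u ≤ vnorm (A *ᵥ u) := by
  rcases eq_or_ne (vnorm u) 0 with hu | hu
  · rw [hu, mul_zero]
    exact vnorm_nonneg _
  · have hw := h _ (vnorm_inv_smul_self hu)
    rwa [mulVec_smul, vnorm_smul, abs_inv, abs_of_nonneg (vnorm_nonneg u),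
      le_inv_mul_iff₀ ((vnorm_nonneg u).lt_of_ne' hu), mul_comm] at hw

lemma vnorm_le_of_forall_vnorm_eq_one {A : Matrix m n ℝ} {c : ℝ}
    (h : ∀ w, vnorm w = 1 → vnorm (A *ᵥ w) ≤ c) (u : n → ℝ) :
    vnorm (A *ᵥ u) ≤ c * vnorm u := by
  rcases eq_or_ne (vnorm u) 0 with hu | hu
  · rw [hu, mul_zero, vnorm_eq_zero.1 hu, mulVec_zero, vnorm_eq_zero.2 rfl]
  · have hw := h _ (vnorm_inv_smul_self hu)
    rwa [mulVec_smul, vnorm_smul, abs_inv, abs_of_nonneg (vnorm_nonneg u),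
      inv_mul_le_iff₀ ((vnorm_nonneg u).lt_of_ne' hu), mul_comm] at hw

lemma vnorm_mulVec_le_frob_mul (A : Matrix m n ℝ) (v : n → ℝ) :
    vnorm (A *ᵥ v) ≤ frob A * vnorm v := by
  rw [vnorm, frob, vnorm, ← Real.sqrt_mul (by positivity), Finset.sum_mul]
  exact Real.sqrt_le_sqrt (Finset.sum_le_sum fun i _ => Finset.sum_mul_sq_le_sq_mul_sq _ _ _)

lemma vnorm_mulVec_le_spec_mul (A : Matrix m n ℝ) (u : n → ℝ) :
    vnorm (A *ᵥ u) ≤ spec A * vnorm u := by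
  have hbdd : BddAbove {c | ∃ v : n → ℝ, vnorm v = 1 ∧ c = vnorm (A *ᵥ v)} := by
    refine ⟨frob A, ?_⟩
    rintro _ ⟨v, hv, rfl⟩
    simpa [hv] using vnorm_mulVec_le_frob_mul A v
  exact vnorm_le_of_forall_vnorm_eq_one (fun w hw => le_csSup hbdd ⟨w, hw, rfl⟩) u

lemma smin_mul_vnorm_le (A : Matrix m n ℝ) (u : n → ℝ) :
    smin A * vnorm u ≤ vnorm (A *ᵥ u) := by
  have hbdd : BddBelow {c | ∃ v : n → ℝ, vnorm v = 1 ∧ c = vnorm (A *ᵥ v)} :=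
    ⟨0, by rintro _ ⟨v, -, rfl⟩; exact vnorm_nonneg _⟩
  exact mul_vnorm_le_of_forall_vnorm_eq_one (fun w hw => csInf_le hbdd ⟨w, hw, rfl⟩) u

lemma exists_vnorm_eq_one_of_smin_ne_zero {A : Matrix m n ℝ} (h : smin A ≠ 0) :
    ∃ v : n → ℝ, vnorm v = 1 := by
  by_contra hne
  refine h ?_
  have hempty : {c | ∃ v : n → ℝ, vnorm v = 1 ∧ c = vnorm (A *ᵥ v)} = ∅ :=
    Set.eq_empty_of_forall_notMem fun _ ⟨v, hv, _⟩ => hne ⟨v, hv⟩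
  rw [smin, hempty, Real.sInf_empty]

lemma vnorm_transpose_mulVec_le {A : Matrix m n ℝ} {c : ℝ} (hc : 0 ≤ c)
    (h : ∀ u, vnorm (A *ᵥ u) ≤ c * vnorm u) (w : m → ℝ) :
    vnorm (Aᵀ *ᵥ w) ≤ c * vnorm w := by
  have key : vnorm (Aᵀ *ᵥ w) ^ 2 ≤ c * vnorm w * vnorm (Aᵀ *ᵥ w) :=
    calc vnorm (Aᵀ *ᵥ w) ^ 2 = (A *ᵥ (Aᵀ *ᵥ w)) ⬝ᵥ w := by
          rw [vnorm_sq, dotProduct_comm, dotProduct_mulVec, ← mulVec_transpose, transpose_transpose]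
      _ ≤ vnorm (A *ᵥ (Aᵀ *ᵥ w)) * vnorm w := (le_abs_self _).trans (abs_dotProduct_le _ _)
      _ ≤ c * vnorm (Aᵀ *ᵥ w) * vnorm w := by gcongr; exacts [vnorm_nonneg _, h _]
      _ = c * vnorm w * vnorm (Aᵀ *ᵥ w) := by ring
  nlinarith [vnorm_nonneg (Aᵀ *ᵥ w), mul_nonneg hc (vnorm_nonneg w)]

lemma vnorm_le_vnorm_transpose_mulVec [DecidableEq n] {Q P : Matrix n n ℝ} (hQP : Q * P = 1)
    (hP : 1 ≤ smin P) (v : n → ℝ) : vnorm v ≤ vnorm (Pᵀ *ᵥ v) := by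
  have hPQ : P * Q = 1 := mul_eq_one_comm.mp hQP
  have hQ : ∀ u, vnorm (Q *ᵥ u) ≤ 1 * vnorm u := fun u => by
    simpa [mulVec_mulVec, hPQ] using
      (mul_le_mul_of_nonneg_right hP (vnorm_nonneg _)).trans (smin_mul_vnorm_le P (Q *ᵥ u))
  calc vnorm v = vnorm (Qᵀ *ᵥ (Pᵀ *ᵥ v)) := by
        rw [mulVec_mulVec, ← transpose_mul, hPQ, transpose_one, one_mulVec]
    _ ≤ 1 * vnorm (Pᵀ *ᵥ v) := vnorm_transpose_mulVec_le zero_le_one hQ _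
    _ = vnorm (Pᵀ *ᵥ v) := one_mul _

end Matrices

section Gram

variable {m n : Type*} [Fintype m] [Fintype n]

lemma dotProduct_transpose_mul_self_mulVec (A : Matrix m n ℝ) (v : n → ℝ) :
    v ⬝ᵥ (Aᵀ * A) *ᵥ v = vnorm (A *ᵥ v) ^ 2 := by
  rw [← mulVec_mulVec, dotProduct_mulVec, vecMul_transpose, vnorm_sq]

lemma lmin_transpose_mul_self_nonneg (A : Matrix m n ℝ) : 0 ≤ lmin (Aᵀ * A) :=
  Real.sInf_nonneg <| by
    rintro _ ⟨v, -, rfl⟩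
    rw [dotProduct_transpose_mul_self_mulVec]
    positivity

lemma le_lmin {B : Matrix n n ℝ} {c : ℝ} (hsphere : ∃ v : n → ℝ, vnorm v = 1)
    (h : ∀ v, vnorm v = 1 → c ≤ v ⬝ᵥ B *ᵥ v) : c ≤ lmin B := by
  obtain ⟨v₀, hv₀⟩ := hsphere
  refine le_csInf ⟨_, v₀, hv₀, rfl⟩ ?_
  rintro _ ⟨v, hv, rfl⟩
  exact h v hv

lemma sqrt_lmin_mul_vnorm_le (A : Matrix m n ℝ) (u : n → ℝ) :
    √(lmin (Aᵀ * A)) * vnorm u ≤ vnorm (A *ᵥ u) := by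
  have hbdd : BddBelow {c | ∃ v : n → ℝ, vnorm v = 1 ∧ c = v ⬝ᵥ (Aᵀ * A) *ᵥ v} :=
    ⟨0, by rintro _ ⟨v, -, rfl⟩; rw [dotProduct_transpose_mul_self_mulVec]; positivity⟩
  refine mul_vnorm_le_of_forall_vnorm_eq_one (fun w hw => ?_) u
  have hw' : lmin (Aᵀ * A) ≤ vnorm (A *ᵥ w) ^ 2 :=
    dotProduct_transpose_mul_self_mulVec A w ▸ csInf_le hbdd ⟨w, hw, rfl⟩
  exact (Real.sqrt_le_sqrt hw').trans_eq (Real.sqrt_sq (vnorm_nonneg _))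

lemma sq_mul_lmin_le_lmin_of_eq_mul_add {A B E : Matrix m n ℝ} {P : Matrix n n ℝ} {κ : ℝ}
    (hsphere : ∃ v : n → ℝ, vnorm v = 1) (hκ : 0 ≤ κ) (hP : ∀ v, vnorm v ≤ vnorm (P *ᵥ v))
    (hA : A = B * P + E) (hE : frob E ≤ (1 - κ) * √(lmin (Bᵀ * B))) :
    κ ^ 2 * lmin (Bᵀ * B) ≤ lmin (Aᵀ * A) := by
  set L := lmin (Bᵀ * B)
  refine le_lmin hsphere fun v hv => ?_
  have hBv : √L ≤ vnorm (B *ᵥ (P *ᵥ v)) := by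
    have := sqrt_lmin_mul_vnorm_le B (P *ᵥ v)
    nlinarith [hP v, Real.sqrt_nonneg L]
  have hEv : vnorm (E *ᵥ v) ≤ (1 - κ) * √L := by
    exact (vnorm_mulVec_le_frob_mul E v).trans (by rw [hv, mul_one]; exact hE)
  have hAv : κ * √L ≤ vnorm (A *ᵥ v) := by
    have hsplit : A *ᵥ v = B *ᵥ (P *ᵥ v) + E *ᵥ v := by rw [hA, add_mulVec, mulVec_mulVec]
    have := vnorm_sub_vnorm_le_vnorm_add (B *ᵥ (P *ᵥ v)) (E *ᵥ v)
    rw [← hsplit] at this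
    linarith
  calc κ ^ 2 * L = (κ * √L) ^ 2 := by
        rw [mul_pow, Real.sq_sqrt (lmin_transpose_mul_self_nonneg B)]
    _ ≤ vnorm (A *ᵥ v) ^ 2 := by gcongr
    _ = v ⬝ᵥ (Aᵀ * A) *ᵥ v := (dotProduct_transpose_mul_self_mulVec A v).symm

end Gram

/-- Smallest eigenvalue of the perturbed Gram matrix: if the rows satisfy
`v⁽ⁱ⁾ = Q⁻¹v*⁽ⁱ⁾ + h⁽ⁱ⁾` where `Q⁻¹` is a right inverse of `Q` with `σ_min(Q⁻¹) ≥ 1`, and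
`‖H‖_F ≤ (1 − 1/√2)·√(λ_min((V*)ᵀV*))`, then `λ_min((V*)ᵀV*) ≤ 2·λ_min(VᵀV)`; moreover if
also `‖Q⁻¹‖ ≤ 2` then `‖v⁽ⁱ⁾‖ ≤ 2‖v*⁽ⁱ⁾‖ + ‖h⁽ⁱ⁾‖` for every `i`. -/
theorem statement_9 (t r : ℕ) (Vstar V H : Matrix (Fin t) (Fin r) ℝ)
    (Q Qinv : Matrix (Fin r) (Fin r) ℝ) (hQinv : Q * Qinv = 1) (hsmin : 1 ≤ smin Qinv)
    (hV : ∀ i, V i = Qinv.mulVec (Vstar i) + H i)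
    (hH : frob H ≤ (1 - 1 / Real.sqrt 2) * Real.sqrt (lmin (Vstarᵀ * Vstar))) :
    lmin (Vstarᵀ * Vstar) ≤ 2 * lmin (Vᵀ * V) ∧
    (spec Qinv ≤ 2 → ∀ i, vnorm (V i) ≤ 2 * vnorm (Vstar i) + vnorm (H i)) := by
  have hVmat : V = Vstar * Qinvᵀ + H := by
    funext i
    rw [hV i, ← vecMul_transpose]
    rfl
  have hsphere := exists_vnorm_eq_one_of_smin_ne_zero (one_pos.trans_le hsmin).ne'
  have hgram := sq_mul_lmin_le_lmin_of_eq_mul_add hsphere (by positivity)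
    (vnorm_le_vnorm_transpose_mulVec hQinv hsmin) hVmat hH
  rw [div_pow, one_pow, Real.sq_sqrt zero_le_two] at hgram
  refine ⟨by linarith, fun hspec i => ?_⟩
  calc vnorm (V i) ≤ vnorm (Qinv *ᵥ Vstar i) + vnorm (H i) := hV i ▸ vnorm_add_le _ _
    _ ≤ 2 * vnorm (Vstar i) + vnorm (H i) := by
        gcongr
        exact (vnorm_mulVec_le_spec_mul Qinv (Vstar i)).trans
          (mul_le_mul_of_nonneg_right hspec (vnorm_nonneg _))

end
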